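/- arXiv:2210.13644 — 6 statements merged into one kernel-verified Lean document; each statement's English description precedes it below -/
import Mathlib

section
/- Along any solution of the reduced two-body system on [t₀, t*), the energy H and the Casimir C are conserved: for all s, t ∈ [t₀, t*), H(m₁(t),m₂(t),m₃(t),ξ(t),p(t)) = H(m₁(s),m₂(s),m₃(s),ξ(s),p(s)) and m₁(t)² + m₂(t)² + m₃(t)² = m₁(s)² + m₂(s)² + m₃(s)². -/
/-! Both quantities have zero time derivative along the flow. For the energy, `(ξ, p)` evolve
Hamiltonian-like, `ξ' = -(ξ² + 1) ∂H/∂p` and `p' = (ξ² + 1) ∂H/∂ξ`, so their contributions cancel,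
and the remaining one vanishes identically: `m' · ∇ₘH = 0`. For the Casimir, `m' · m = 0`.
A function with zero derivative on the interval `[t₀, t*)` is constant there. -/

open Filter Set

/-- The energy (Hamiltonian) of the reduced two-body system on the sphere,
in the variables `(m₁, m₂, m₃, ξ, p)`. -/
noncomputable def energyH (m1 m2 m3 xi p : ℝ) : ℝ :=
  (1/2) * (m1^2 + m2^2 - 2*m1*p + 2*p^2 + xi*(-2 - 2*m2*m3 + m3^2*xi) + m3^2*(1 + xi^2))

theorem Convex.eq_of_forall_hasDerivAt_zero {E : Type*} [NormedAddCommGroup E]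
    [NormedSpace ℝ E] {s : Set ℝ} (hs : Convex ℝ s) {f : ℝ → E} (hf : ∀ x ∈ s, HasDerivAt f 0 x)
    {x y : ℝ} (hx : x ∈ s) (hy : y ∈ s) : f x = f y := by
  have h := hs.norm_image_sub_le_of_norm_hasDerivWithin_le
    (fun z hz => (hf z hz).hasDerivWithinAt) (fun _ _ => norm_zero.le) hy hx
  rwa [zero_mul, norm_le_zero_iff, sub_eq_zero] at h

theorem convex_Ici_inter_coe_preimage_Iio (a : ℝ) (b : EReal) :
    Convex ℝ (Ici a ∩ (fun t : ℝ => (t : EReal)) ⁻¹' Iio b) :=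
  (ordConnected_Ici.inter (ordConnected_Iio.preimage_mono EReal.coe_strictMono.monotone)).convex

theorem HasDerivAt.energyH {m1 m2 m3 xi p : ℝ → ℝ} {m1' m2' m3' xi' p' t : ℝ}
    (h1 : HasDerivAt m1 m1' t) (h2 : HasDerivAt m2 m2' t) (h3 : HasDerivAt m3 m3' t)
    (hxi : HasDerivAt xi xi' t) (hp : HasDerivAt p p' t) :
    HasDerivAt (fun u => energyH (m1 u) (m2 u) (m3 u) (xi u) (p u))
      ((m1 t - p t) * m1' + (m2 t - xi t * m3 t) * m2'
        + (m3 t + 2 * m3 t * xi t ^ 2 - xi t * m2 t) * m3'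
        + (2 * m3 t ^ 2 * xi t - 1 - m2 t * m3 t) * xi' + (2 * p t - m1 t) * p') t := by
  have h := ((h1.pow 2).add (h2.pow 2)
    |>.sub ((h1.const_mul 2).mul hp)
    |>.add ((hp.pow 2).const_mul 2)
    |>.add (hxi.mul ((((h2.const_mul 2).mul h3).const_sub (-2)).add ((h3.pow 2).mul hxi)))
    |>.add ((h3.pow 2).mul ((hxi.pow 2).const_add 1))).const_mul (1 / 2)
  refine h.congr_deriv ?_
  simp only [Pi.add_apply, Pi.mul_apply, Pi.pow_apply]
  ring

theorem energy_and_casimir_conserved_general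
    (t0 : ℝ) (tstar : EReal)
    (m1 m2 m3 xi p : ℝ → ℝ)
    (hm1 : ∀ t : ℝ, t0 ≤ t → (t : EReal) < tstar →
      HasDerivAt m1 (xi t * (-(m2 t)^2 + (m3 t)^2 + 2 * m2 t * m3 t * xi t)) t)
    (hm2 : ∀ t : ℝ, t0 ≤ t → (t : EReal) < tstar →
      HasDerivAt m2 (m1 t * m2 t * xi t - m3 t * p t - 2 * m1 t * m3 t * (xi t)^2) t)
    (hm3 : ∀ t : ℝ, t0 ≤ t → (t : EReal) < tstar →
      HasDerivAt m3 (m2 t * p t - m1 t * m3 t * xi t) t)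
    (hxi : ∀ t : ℝ, t0 ≤ t → (t : EReal) < tstar →
      HasDerivAt xi (-((xi t)^2 + 1) * (2 * p t - m1 t)) t)
    (hp : ∀ t : ℝ, t0 ≤ t → (t : EReal) < tstar →
      HasDerivAt p (-((xi t)^2 + 1) * (1 + m2 t * m3 t - 2 * (m3 t)^2 * xi t)) t) :
    ∀ s t : ℝ, t0 ≤ s → (s : EReal) < tstar → t0 ≤ t → (t : EReal) < tstar →
      energyH (m1 t) (m2 t) (m3 t) (xi t) (p t)
        = energyH (m1 s) (m2 s) (m3 s) (xi s) (p s) ∧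
      (m1 t)^2 + (m2 t)^2 + (m3 t)^2 = (m1 s)^2 + (m2 s)^2 + (m3 s)^2 := by
  intro s t hs hs' ht ht'
  have hI := convex_Ici_inter_coe_preimage_Iio t0 tstar
  constructor
  · refine hI.eq_of_forall_hasDerivAt_zero
      (f := fun u => energyH (m1 u) (m2 u) (m3 u) (xi u) (p u))
      (fun u ⟨hu, hu'⟩ => ?_) ⟨ht, ht'⟩ ⟨hs, hs'⟩
    refine ((hm1 u hu hu').energyH (hm2 u hu hu') (hm3 u hu hu') (hxi u hu hu')
      (hp u hu hu')).congr_deriv ?_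
    ring
  · refine hI.eq_of_forall_hasDerivAt_zero (f := fun u => m1 u ^ 2 + m2 u ^ 2 + m3 u ^ 2)
      (fun u ⟨hu, hu'⟩ => ?_) ⟨ht, ht'⟩ ⟨hs, hs'⟩
    refine ((((hm1 u hu hu').pow 2).add ((hm2 u hu hu').pow 2)).add
      ((hm3 u hu hu').pow 2)).congr_deriv ?_
    ring

/-- Along any solution of the reduced two-body system on `[t₀, t*)` (with
`t* ∈ (t₀, ∞]`), the energy `H` and the Casimir `C = m₁² + m₂² + m₃²` are conserved. -/
theorem energy_and_casimir_conserved
    (t0 : ℝ) (tstar : EReal) (ht0 : (t0 : EReal) < tstar)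
    (m1 m2 m3 xi p : ℝ → ℝ)
    (hm1 : ∀ t : ℝ, t0 ≤ t → (t : EReal) < tstar →
      HasDerivAt m1 (xi t * (-(m2 t)^2 + (m3 t)^2 + 2 * m2 t * m3 t * xi t)) t)
    (hm2 : ∀ t : ℝ, t0 ≤ t → (t : EReal) < tstar →
      HasDerivAt m2 (m1 t * m2 t * xi t - m3 t * p t - 2 * m1 t * m3 t * (xi t)^2) t)
    (hm3 : ∀ t : ℝ, t0 ≤ t → (t : EReal) < tstar →
      HasDerivAt m3 (m2 t * p t - m1 t * m3 t * xi t) t)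
    (hxi : ∀ t : ℝ, t0 ≤ t → (t : EReal) < tstar →
      HasDerivAt xi (-((xi t)^2 + 1) * (2 * p t - m1 t)) t)
    (hp : ∀ t : ℝ, t0 ≤ t → (t : EReal) < tstar →
      HasDerivAt p (-((xi t)^2 + 1) * (1 + m2 t * m3 t - 2 * (m3 t)^2 * xi t)) t) :
    ∀ s t : ℝ, t0 ≤ s → (s : EReal) < tstar → t0 ≤ t → (t : EReal) < tstar →
      energyH (m1 t) (m2 t) (m3 t) (xi t) (p t)
        = energyH (m1 s) (m2 s) (m3 s) (xi s) (p s) ∧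
      (m1 t)^2 + (m2 t)^2 + (m3 t)^2 = (m1 s)^2 + (m2 s)^2 + (m3 s)^2 :=
  energy_and_casimir_conserved_general t0 tstar m1 m2 m3 xi p hm1 hm2 hm3 hxi hp
end

section
/- Let (m₁,m₂,m₃,ξ,p) be a solution of the reduced two-body system on [t₀, t*) with conserved energy value h and conserved Casimir value c. Then for every t ∈ [t₀, t*) one has ξ(t) ≥ c/4 − h. In particular, ξ(t) cannot tend to −∞ as t → t*⁻, i.e. there are no trajectories leading to antipodal singularities. -/
open Filter Set

/-- The filter of approach `t → t*⁻`, where `t* ∈ ℝ ∪ {±∞}` is encoded as an `EReal`: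
for finite `t*` this is `𝓝[<] t*`, and for `t* = ⊤` it is `atTop`. -/
noncomputable def approachFilter (tstar : EReal) : Filter ℝ :=
  Filter.comap (fun t : ℝ => (t : EReal)) (nhdsWithin tstar (Set.Iio tstar))


private lemma approachFilter_neBot_aux (tstar : EReal) (t0 : ℝ) (ht0 : (t0 : EReal) < tstar) :
    (Filter.comap (fun t : ℝ => (t : EReal)) (nhdsWithin tstar (Set.Iio tstar))).NeBot := by
  induction tstar with
  | bot => simp at ht0
  | coe a =>
    have hco : Tendsto (fun t : ℝ => (t : EReal)) (nhdsWithin a (Set.Iio a))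
        (nhdsWithin (a : EReal) (Set.Iio (a : EReal))) := by
      apply tendsto_nhdsWithin_of_tendsto_nhds_of_eventually_within
      · exact (continuous_coe_real_ereal.tendsto a).mono_left nhdsWithin_le_nhds
      · exact eventually_mem_nhdsWithin.mono fun x hx => EReal.coe_lt_coe_iff.mpr hx
    exact Filter.NeBot.mono inferInstance (tendsto_iff_comap.mp hco)
  | top =>
    have hco : Tendsto (fun t : ℝ => (t : EReal)) atTop
        (nhdsWithin ⊤ (Set.Iio (⊤ : EReal))) := by
      apply tendsto_nhdsWithin_of_tendsto_nhds_of_eventually_within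
      · exact EReal.tendsto_nhds_top_iff_real.mpr fun x => Filter.eventually_atTop.mpr
          ⟨x + 1, fun y hy => by exact_mod_cast lt_of_lt_of_le (by linarith) hy⟩
      · exact Filter.Eventually.of_forall fun x => EReal.coe_lt_top x
    exact Filter.NeBot.mono inferInstance (tendsto_iff_comap.mp hco)

/-- Along a solution of the reduced system with conserved energy `h` and Casimir `c`,
one has `ξ(t) ≥ c/4 − h` for all `t ∈ [t₀, t*)`; in particular `ξ` cannot tend to `−∞`
as `t → t*⁻`, i.e. there are no trajectories leading to antipodal singularities. -/
theorem no_antipodal_singularities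
    (t0 : ℝ) (tstar : EReal) (ht0 : (t0 : EReal) < tstar)
    (m1 m2 m3 xi p : ℝ → ℝ) (h c : ℝ)
    (hm1 : ∀ t : ℝ, t0 ≤ t → (t : EReal) < tstar →
      HasDerivAt m1 (xi t * (-(m2 t)^2 + (m3 t)^2 + 2 * m2 t * m3 t * xi t)) t)
    (hm2 : ∀ t : ℝ, t0 ≤ t → (t : EReal) < tstar →
      HasDerivAt m2 (m1 t * m2 t * xi t - m3 t * p t - 2 * m1 t * m3 t * (xi t)^2) t)
    (hm3 : ∀ t : ℝ, t0 ≤ t → (t : EReal) < tstar →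
      HasDerivAt m3 (m2 t * p t - m1 t * m3 t * xi t) t)
    (hxi : ∀ t : ℝ, t0 ≤ t → (t : EReal) < tstar →
      HasDerivAt xi (-((xi t)^2 + 1) * (2 * p t - m1 t)) t)
    (hp : ∀ t : ℝ, t0 ≤ t → (t : EReal) < tstar →
      HasDerivAt p (-((xi t)^2 + 1) * (1 + m2 t * m3 t - 2 * (m3 t)^2 * xi t)) t)
    (hH : ∀ t : ℝ, t0 ≤ t → (t : EReal) < tstar →
      energyH (m1 t) (m2 t) (m3 t) (xi t) (p t) = h)
    (hC : ∀ t : ℝ, t0 ≤ t → (t : EReal) < tstar →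
      (m1 t)^2 + (m2 t)^2 + (m3 t)^2 = c) :
    (∀ t : ℝ, t0 ≤ t → (t : EReal) < tstar → c / 4 - h ≤ xi t) ∧
      ¬ Tendsto xi (approachFilter tstar) atBot := by
  have key : ∀ t : ℝ, t0 ≤ t → (t : EReal) < tstar → c / 4 - h ≤ xi t := by
    intro t ht1 ht2
    have hH' := hH t ht1 ht2
    have hC' := hC t ht1 ht2
    unfold energyH at hH'
    nlinarith [sq_nonneg (p t - m1 t / 2), sq_nonneg (m3 t * xi t - m2 t / 2),
      sq_nonneg (m3 t)]
  refine ⟨key, ?_⟩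
  have hne : (approachFilter tstar).NeBot := approachFilter_neBot_aux tstar t0 ht0
  intro hT
  have hopen : IsOpen (Set.Ioi (t0 : EReal)) := isOpen_Ioi
  have hA : ∀ᶠ t : ℝ in approachFilter tstar,
      (t0 : EReal) < (t : EReal) ∧ (t : EReal) < tstar := by
    unfold approachFilter
    filter_upwards [Filter.preimage_mem_comap (Filter.inter_mem
      (mem_nhdsWithin_of_mem_nhds (hopen.mem_nhds ht0)) self_mem_nhdsWithin)] with t ht
    exact ⟨ht.1, ht.2⟩
  have hB : ∀ᶠ t : ℝ in approachFilter tstar, xi t ≤ c / 4 - h - 1 :=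
    hT.eventually_le_atBot (c / 4 - h - 1)
  obtain ⟨t, ⟨h1, h2⟩, hle⟩ := (hA.and hB).exists
  have := key t (le_of_lt (EReal.coe_lt_coe_iff.mp h1)) h2
  linarith
end

section
/- Let (m₁,m₂,m₃,ξ,p) be a collision solution of the reduced two-body system on [t₀, t*), i.e. ξ(t) → +∞ as t → t*⁻. Then m₃(t) → 0 as t → t*⁻. -/
open Filter Set

def energy (m1 m2 m3 xi p : ℝ) : ℝ :=
  p ^ 2 - m1 * p + m3 ^ 2 * xi ^ 2 - m2 * m3 * xi - xi

def casimir (m1 m2 m3 : ℝ) : ℝ :=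
  m1 ^ 2 + m2 ^ 2 + m3 ^ 2

theorem approachFilter_eventually_mem {t0 : ℝ} {tstar : EReal} (ht0 : (t0 : EReal) < tstar) :
    ∀ᶠ t in approachFilter tstar, t0 ≤ t ∧ (t : EReal) < tstar := by
  have hV : Ioi (t0 : EReal) ∩ Iio tstar ∈ nhdsWithin tstar (Iio tstar) :=
    inter_mem (mem_nhdsWithin_of_mem_nhds (isOpen_Ioi.mem_nhds ht0)) self_mem_nhdsWithin
  filter_upwards [preimage_mem_comap hV] with t ⟨h1, h2⟩
  exact ⟨(EReal.coe_lt_coe_iff.mp h1).le, h2⟩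

theorem eq_of_hasDerivAt_zero_of_lt {E : Type*} [NormedAddCommGroup E] [NormedSpace ℝ E]
    {f : ℝ → E} {t0 : ℝ} {tstar : EReal}
    (hf : ∀ t : ℝ, t0 ≤ t → (t : EReal) < tstar → HasDerivAt f 0 t)
    {t : ℝ} (h1 : t0 ≤ t) (h2 : (t : EReal) < tstar) : f t = f t0 := by
  have hf' : ∀ s ∈ Icc t0 t, HasDerivAt f 0 s := fun s hs =>
    hf s hs.1 ((EReal.coe_le_coe_iff.mpr hs.2).trans_lt h2)
  exact constant_of_has_deriv_right_zero
    (fun s hs => (hf' s hs).continuousAt.continuousWithinAt)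
    (fun s hs => (hf' s (Ico_subset_Icc_self hs)).hasDerivWithinAt) t (right_mem_Icc.mpr h1)

section FirstIntegrals

variable {m1 m2 m3 xi p : ℝ → ℝ} {t : ℝ}

theorem hasDerivAt_energy
    (hm1 : HasDerivAt m1 (xi t * (-(m2 t)^2 + (m3 t)^2 + 2 * m2 t * m3 t * xi t)) t)
    (hm2 : HasDerivAt m2 (m1 t * m2 t * xi t - m3 t * p t - 2 * m1 t * m3 t * (xi t)^2) t)
    (hm3 : HasDerivAt m3 (m2 t * p t - m1 t * m3 t * xi t) t)
    (hxi : HasDerivAt xi (-((xi t)^2 + 1) * (2 * p t - m1 t)) t)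
    (hp : HasDerivAt p (-((xi t)^2 + 1) * (1 + m2 t * m3 t - 2 * (m3 t)^2 * xi t)) t) :
    HasDerivAt (fun s => energy (m1 s) (m2 s) (m3 s) (xi s) (p s)) 0 t := by
  refine (((((hp.pow 2).sub (hm1.mul hp)).add ((hm3.pow 2).mul (hxi.pow 2))).sub
    ((hm2.mul hm3).mul hxi)).sub hxi).congr_deriv ?_
  simp only [Pi.pow_apply, Pi.mul_apply]
  ring

theorem hasDerivAt_casimir
    (hm1 : HasDerivAt m1 (xi t * (-(m2 t)^2 + (m3 t)^2 + 2 * m2 t * m3 t * xi t)) t)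
    (hm2 : HasDerivAt m2 (m1 t * m2 t * xi t - m3 t * p t - 2 * m1 t * m3 t * (xi t)^2) t)
    (hm3 : HasDerivAt m3 (m2 t * p t - m1 t * m3 t * xi t) t) :
    HasDerivAt (fun s => casimir (m1 s) (m2 s) (m3 s)) 0 t := by
  refine (((hm1.pow 2).add (hm2.pow 2)).add (hm3.pow 2)).congr_deriv ?_
  push_cast
  ring

end FirstIntegrals

theorem sq_mul_sq_le_energy_casimir (m1 m2 m3 xi p : ℝ) :
    m3 ^ 2 * xi ^ 2 ≤ 2 * energy m1 m2 m3 xi p + casimir m1 m2 m3 + 2 * xi := by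
  unfold energy casimir
  nlinarith [sq_nonneg (m2 - m3 * xi), sq_nonneg (2 * p - m1), sq_nonneg m3]

theorem sq_le_energy_casimir {xi : ℝ} (hxi : 0 < xi) (m1 m2 m3 p : ℝ) :
    m3 ^ 2 ≤ (2 * energy m1 m2 m3 xi p + casimir m1 m2 m3) * xi⁻¹ ^ 2 + 2 * xi⁻¹ := by
  have h := sq_mul_sq_le_energy_casimir m1 m2 m3 xi p
  calc m3 ^ 2 = m3 ^ 2 * xi ^ 2 * xi⁻¹ ^ 2 := by field_simp
    _ ≤ (2 * energy m1 m2 m3 xi p + casimir m1 m2 m3 + 2 * xi) * xi⁻¹ ^ 2 := by gcongr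
    _ = _ := by field_simp

theorem Filter.Tendsto.of_sq_le {α : Type*} {l : Filter α} {f g : α → ℝ}
    (hg : Tendsto g l (nhds 0)) (hfg : ∀ᶠ x in l, f x ^ 2 ≤ g x) : Tendsto f l (nhds 0) := by
  have hsqrt : Tendsto (fun x => Real.sqrt (g x)) l (nhds 0) := by
    simpa [Function.comp_def] using (Real.continuous_sqrt.tendsto 0).comp hg
  refine squeeze_zero_norm' ?_ hsqrt
  filter_upwards [hfg] with x hx
  simpa [Real.sqrt_sq_eq_abs] using Real.sqrt_le_sqrt hx

/-- Along a collision solution of the reduced two-body system (`ξ(t) → +∞` as `t → t*⁻`),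
one has `m₃(t) → 0` as `t → t*⁻`. -/
theorem m3_tendsto_zero_at_collision
    (t0 : ℝ) (tstar : EReal) (ht0 : (t0 : EReal) < tstar)
    (m1 m2 m3 xi p : ℝ → ℝ)
    (hm1 : ∀ t : ℝ, t0 ≤ t → (t : EReal) < tstar →
      HasDerivAt m1 (xi t * (-(m2 t)^2 + (m3 t)^2 + 2 * m2 t * m3 t * xi t)) t)
    (hm2 : ∀ t : ℝ, t0 ≤ t → (t : EReal) < tstar →
      HasDerivAt m2 (m1 t * m2 t * xi t - m3 t * p t - 2 * m1 t * m3 t * (xi t)^2) t)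
    (hm3 : ∀ t : ℝ, t0 ≤ t → (t : EReal) < tstar →
      HasDerivAt m3 (m2 t * p t - m1 t * m3 t * xi t) t)
    (hxi : ∀ t : ℝ, t0 ≤ t → (t : EReal) < tstar →
      HasDerivAt xi (-((xi t)^2 + 1) * (2 * p t - m1 t)) t)
    (hp : ∀ t : ℝ, t0 ≤ t → (t : EReal) < tstar →
      HasDerivAt p (-((xi t)^2 + 1) * (1 + m2 t * m3 t - 2 * (m3 t)^2 * xi t)) t)
    (hcoll : Tendsto xi (approachFilter tstar) atTop) :
    Tendsto m3 (approachFilter tstar) (nhds 0) := by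
  set E := fun t => energy (m1 t) (m2 t) (m3 t) (xi t) (p t)
  set N := fun t => casimir (m1 t) (m2 t) (m3 t)
  have hE : ∀ t, t0 ≤ t → (t : EReal) < tstar → E t = E t0 :=
    fun _ => eq_of_hasDerivAt_zero_of_lt fun s h1 h2 =>
      hasDerivAt_energy (hm1 s h1 h2) (hm2 s h1 h2) (hm3 s h1 h2) (hxi s h1 h2) (hp s h1 h2)
  have hN : ∀ t, t0 ≤ t → (t : EReal) < tstar → N t = N t0 :=
    fun _ => eq_of_hasDerivAt_zero_of_lt fun s h1 h2 =>
      hasDerivAt_casimir (hm1 s h1 h2) (hm2 s h1 h2) (hm3 s h1 h2)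
  have hinv := hcoll.inv_tendsto_atTop
  refine Tendsto.of_sq_le (g := fun t => (2 * E t0 + N t0) * (xi t)⁻¹ ^ 2 + 2 * (xi t)⁻¹)
    (by simpa using ((hinv.pow 2).const_mul _).add (hinv.const_mul 2)) ?_
  filter_upwards [approachFilter_eventually_mem ht0, hcoll.eventually_gt_atTop 0]
    with t ⟨h1, h2⟩ hpos
  rw [← hE t h1 h2, ← hN t h1 h2]
  exact sq_le_energy_casimir hpos _ _ _ _
end

section
/- Let (m₁,m₂,m₃,ξ,p) be a collision solution of the reduced two-body system on [t₀, t*) with t* < ∞ and ξ(t) → +∞ as t → t*⁻. Then ξ is eventually strictly monotonically increasing: there exists t₁ ∈ [t₀, t*) such that ξ'(t) > 0 for all t ∈ [t₁, t*). -/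
/-!
Put `z = ξ / √(ξ² + 1)` (that is `cos q`), so that `z' = (m₁ - 2p) / √(ξ² + 1)` has the sign of
`ξ'`. After eliminating `p²` with the conserved energy and bounding the `mᵢ` with the conserved
`m₁² + m₂² + m₃²`, `z''` is negative once `ξ` is large, i.e. near the collision. There `z` is
strictly concave, and a strictly concave function that stays below its limit `1` at `t*` must be
strictly increasing.
-/

open Filter Set Topology

theorem exists_mem_Ico_forall_of_eventually_nhdsLT {P : ℝ → Prop} {a b : ℝ} (hab : a < b)
    (h : ∀ᶠ t in 𝓝[<] b, P t) : ∃ t₁ ∈ Ico a b, ∀ t ∈ Ico t₁ b, P t := by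
  obtain ⟨l, hl, hlP⟩ := mem_nhdsLT_iff_exists_Ico_subset.mp h
  exact ⟨max a l, ⟨le_max_left a l, max_lt hab hl⟩,
    fun t ht => hlP ⟨(le_max_right a l).trans ht.1, ht.2⟩⟩

theorem eq_of_hasDerivAt_zero_of_mem_Ico {f : ℝ → ℝ} {a b : ℝ}
    (hf : ∀ t ∈ Ico a b, HasDerivAt f 0 t) : ∀ t ∈ Ico a b, f t = f a := by
  intro t ht
  have hsub : Icc a t ⊆ Ico a b := Icc_subset_Ico_right ht.2
  exact constant_of_has_deriv_right_zero
    (fun x hx => (hf x (hsub hx)).continuousAt.continuousWithinAt)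
    (fun x hx => (hf x (hsub (Ico_subset_Icc_self hx))).hasDerivWithinAt) t (right_mem_Icc.2 ht.1)

theorem strictAntiOn_Ico_of_hasDerivAt_neg {f f' : ℝ → ℝ} {a b : ℝ}
    (hf : ∀ t ∈ Ico a b, HasDerivAt f (f' t) t) (hf' : ∀ t ∈ Ico a b, f' t < 0) :
    StrictAntiOn f (Ico a b) := by
  refine strictAntiOn_of_hasDerivWithinAt_neg (f' := f') (convex_Ico a b)
    (fun t ht => (hf t ht).continuousAt.continuousWithinAt) (fun t ht => ?_) (fun t ht => ?_)
  · rw [interior_Ico] at ht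
    exact (hf t (Ioo_subset_Ico_self ht)).hasDerivWithinAt
  · rw [interior_Ico] at ht
    exact hf' t (Ioo_subset_Ico_self ht)

theorem antitoneOn_Ico_of_hasDerivAt_nonpos {f f' : ℝ → ℝ} {a b : ℝ}
    (hf : ∀ t ∈ Ico a b, HasDerivAt f (f' t) t) (hf' : ∀ t ∈ Ico a b, f' t ≤ 0) :
    AntitoneOn f (Ico a b) := by
  refine antitoneOn_of_hasDerivWithinAt_nonpos (f' := f') (convex_Ico a b)
    (fun t ht => (hf t ht).continuousAt.continuousWithinAt) (fun t ht => ?_) (fun t ht => ?_)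
  · rw [interior_Ico] at ht
    exact (hf t (Ioo_subset_Ico_self ht)).hasDerivWithinAt
  · rw [interior_Ico] at ht
    exact hf' t (Ioo_subset_Ico_self ht)

theorem pos_of_strictAntiOn_of_hasDerivAt_of_tendsto {z w : ℝ → ℝ} {a b L : ℝ}
    (hz : ∀ t ∈ Ico a b, HasDerivAt z (w t) t) (hw : StrictAntiOn w (Ico a b))
    (hzL : ∀ t ∈ Ico a b, z t < L) (hlim : Tendsto z (𝓝[<] b) (𝓝 L)) :
    ∀ t ∈ Ico a b, 0 < w t := by
  intro s hs
  by_contra! hws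
  have hsb : s ∈ Ico s b := left_mem_Ico.2 hs.2
  have hsub : Ico s b ⊆ Ico a b := Ico_subset_Ico_left hs.1
  have hanti : AntitoneOn z (Ico s b) :=
    antitoneOn_Ico_of_hasDerivAt_nonpos (fun t ht => hz t (hsub ht))
      (fun t ht => (hw.antitoneOn (hsub hsb) (hsub ht) ht.1).trans hws)
  have hLz : L ≤ z s := le_of_tendsto hlim <| by
    filter_upwards [Ioo_mem_nhdsLT hs.2] with t ht
    exact hanti hsb (Ioo_subset_Ico_self ht) ht.1.le
  exact (hzL s hs).not_ge hLz

theorem div_sqrt_sq_add_one_lt_one (x : ℝ) : x / √(x ^ 2 + 1) < 1 := by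
  rw [div_lt_one (by positivity)]
  calc x ≤ |x| := le_abs_self x
    _ = √(x ^ 2) := (Real.sqrt_sq_eq_abs x).symm
    _ < √(x ^ 2 + 1) := Real.sqrt_lt_sqrt (sq_nonneg x) (lt_add_one _)

theorem tendsto_div_sqrt_sq_add_one_atTop :
    Tendsto (fun x : ℝ => x / √(x ^ 2 + 1)) atTop (𝓝 1) := by
  have hinv : Tendsto (fun x : ℝ => (x ^ 2 + 1)⁻¹) atTop (𝓝 0) :=
    tendsto_inv_atTop_zero.comp <| tendsto_atTop_add_const_right _ _ <|
      tendsto_pow_atTop two_ne_zero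
  have hlim : Tendsto (fun x : ℝ => √(1 - (x ^ 2 + 1)⁻¹)) atTop (𝓝 1) := by
    simpa [Function.comp_def] using
      (((continuous_const (y := (1 : ℝ))).sub continuous_id).sqrt.tendsto 0).comp hinv
  refine hlim.congr' ?_
  filter_upwards [eventually_ge_atTop 0] with x hx
  have hx1 : 1 - (x ^ 2 + 1)⁻¹ = x ^ 2 / (x ^ 2 + 1) := by field_simp; ring
  rw [hx1, Real.sqrt_div (sq_nonneg x), Real.sqrt_sq hx]

theorem HasDerivAt.sqrt_sq_add_one {f : ℝ → ℝ} {f' x : ℝ} (hf : HasDerivAt f f' x) :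
    HasDerivAt (fun y => √(f y ^ 2 + 1)) (f x * f' / √(f x ^ 2 + 1)) x := by
  have hsq : HasDerivAt (fun y => f y ^ 2 + 1) (2 * f x * f') x := by
    simpa using (hf.fun_pow 2).add_const 1
  convert hsq.sqrt (by positivity) using 1
  field_simp

def twoBodyEnergy (m₁ m₂ m₃ ξ p : ℝ) : ℝ :=
  p ^ 2 - m₁ * p + m₃ ^ 2 * ξ ^ 2 - m₂ * m₃ * ξ - ξ

/-- `√(ξ² + 1)` times the second derivative of `ξ / √(ξ² + 1)` along the flow, with `p²`
eliminated through the energy `E`. -/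
def cosAccel (m₁ m₂ m₃ ξ E : ℝ) : ℝ :=
  2 + 2 * m₂ * m₃ - 2 * ξ ^ 2 - 4 * ξ * E - ξ * (m₁ ^ 2 + m₂ ^ 2 + 3 * m₃ ^ 2)

theorem cosAccel_neg {m₁ m₂ m₃ ξ E : ℝ}
    (hξ : 2 + (m₁ ^ 2 + m₂ ^ 2 + m₃ ^ 2) + 4 * |E| < ξ) : cosAccel m₁ m₂ m₃ ξ E < 0 := by
  have hM : 0 ≤ m₁ ^ 2 + m₂ ^ 2 + m₃ ^ 2 := by positivity
  have hξ1 : 1 < ξ := by linarith [abs_nonneg E]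
  have hm23 : 2 * m₂ * m₃ ≤ m₁ ^ 2 + m₂ ^ 2 + m₃ ^ 2 := by nlinarith [sq_nonneg (m₂ - m₃)]
  have hE : -(4 * ξ * E) ≤ 4 * ξ * |E| := by nlinarith [neg_abs_le E]
  have hrest : 0 ≤ ξ * (m₁ ^ 2 + m₂ ^ 2 + 3 * m₃ ^ 2) := by positivity
  unfold cosAccel
  nlinarith

structure IsReducedTwoBodySolution (a b : ℝ) (m1 m2 m3 xi p : ℝ → ℝ) : Prop where
  hasDerivAt_m1 : ∀ t ∈ Ico a b,
    HasDerivAt m1 (xi t * (-(m2 t)^2 + (m3 t)^2 + 2 * m2 t * m3 t * xi t)) t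
  hasDerivAt_m2 : ∀ t ∈ Ico a b,
    HasDerivAt m2 (m1 t * m2 t * xi t - m3 t * p t - 2 * m1 t * m3 t * (xi t)^2) t
  hasDerivAt_m3 : ∀ t ∈ Ico a b,
    HasDerivAt m3 (m2 t * p t - m1 t * m3 t * xi t) t
  hasDerivAt_xi : ∀ t ∈ Ico a b,
    HasDerivAt xi (-((xi t)^2 + 1) * (2 * p t - m1 t)) t
  hasDerivAt_p : ∀ t ∈ Ico a b,
    HasDerivAt p (-((xi t)^2 + 1) * (1 + m2 t * m3 t - 2 * (m3 t)^2 * xi t)) t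

namespace IsReducedTwoBodySolution

variable {a b : ℝ} {m1 m2 m3 xi p : ℝ → ℝ}

theorem energy_eq (h : IsReducedTwoBodySolution a b m1 m2 m3 xi p) :
    ∀ t ∈ Ico a b, twoBodyEnergy (m1 t) (m2 t) (m3 t) (xi t) (p t) =
      twoBodyEnergy (m1 a) (m2 a) (m3 a) (xi a) (p a) := by
  refine eq_of_hasDerivAt_zero_of_mem_Ico
    (f := fun t => twoBodyEnergy (m1 t) (m2 t) (m3 t) (xi t) (p t)) fun t ht => ?_
  have h1 := h.hasDerivAt_m1 t ht
  have h2 := h.hasDerivAt_m2 t ht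
  have h3 := h.hasDerivAt_m3 t ht
  have hξ := h.hasDerivAt_xi t ht
  have hp := h.hasDerivAt_p t ht
  refine (((((hp.fun_pow 2).sub (h1.mul hp)).add ((h3.fun_pow 2).mul (hξ.fun_pow 2))).sub
    ((h2.fun_mul h3).fun_mul hξ)).sub hξ).congr_deriv ?_
  ring

theorem sum_sq_eq (h : IsReducedTwoBodySolution a b m1 m2 m3 xi p) :
    ∀ t ∈ Ico a b, m1 t ^ 2 + m2 t ^ 2 + m3 t ^ 2 = m1 a ^ 2 + m2 a ^ 2 + m3 a ^ 2 := by
  refine eq_of_hasDerivAt_zero_of_mem_Ico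
    (f := fun t => m1 t ^ 2 + m2 t ^ 2 + m3 t ^ 2) fun t ht => ?_
  refine ((((h.hasDerivAt_m1 t ht).fun_pow 2).add ((h.hasDerivAt_m2 t ht).fun_pow 2)).add
    ((h.hasDerivAt_m3 t ht).fun_pow 2)).congr_deriv ?_
  ring

theorem hasDerivAt_xi_div_sqrt (h : IsReducedTwoBodySolution a b m1 m2 m3 xi p) :
    ∀ t ∈ Ico a b, HasDerivAt (fun t => xi t / √(xi t ^ 2 + 1))
      ((m1 t - 2 * p t) / √(xi t ^ 2 + 1)) t := by
  intro t ht
  have hξ := h.hasDerivAt_xi t ht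
  have hs : 0 < √(xi t ^ 2 + 1) := by positivity
  refine (hξ.div hξ.sqrt_sq_add_one hs.ne').congr_deriv ?_
  field_simp
  rw [Real.sq_sqrt (by positivity)]
  ring

theorem hasDerivAt_m1_sub_two_p_div_sqrt (h : IsReducedTwoBodySolution a b m1 m2 m3 xi p) :
    ∀ t ∈ Ico a b, HasDerivAt (fun t => (m1 t - 2 * p t) / √(xi t ^ 2 + 1))
      (cosAccel (m1 t) (m2 t) (m3 t) (xi t) (twoBodyEnergy (m1 a) (m2 a) (m3 a) (xi a) (p a)) /
        √(xi t ^ 2 + 1)) t := by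
  intro t ht
  have hs : 0 < √(xi t ^ 2 + 1) := by positivity
  refine (((h.hasDerivAt_m1 t ht).fun_sub ((h.hasDerivAt_p t ht).const_mul 2)).div
    (h.hasDerivAt_xi t ht).sqrt_sq_add_one hs.ne').congr_deriv ?_
  rw [← h.energy_eq t ht]
  unfold cosAccel twoBodyEnergy
  field_simp
  rw [Real.sq_sqrt (by positivity)]
  ring

end IsReducedTwoBodySolution

/-- Along a collision solution with `t* < ∞` and `ξ(t) → +∞` as `t → t*⁻`, the
function `ξ` is eventually strictly monotonically increasing: there is `t₁ ∈ [t₀, t*)`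
with `ξ\'(t) > 0` for all `t ∈ [t₁, t*)`. -/
theorem xi_eventually_strictly_increasing
    (t0 tstar : ℝ) (ht0 : t0 < tstar)
    (m1 m2 m3 xi p : ℝ → ℝ)
    (hm1 : ∀ t ∈ Set.Ico t0 tstar,
      HasDerivAt m1 (xi t * (-(m2 t)^2 + (m3 t)^2 + 2 * m2 t * m3 t * xi t)) t)
    (hm2 : ∀ t ∈ Set.Ico t0 tstar,
      HasDerivAt m2 (m1 t * m2 t * xi t - m3 t * p t - 2 * m1 t * m3 t * (xi t)^2) t)
    (hm3 : ∀ t ∈ Set.Ico t0 tstar,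
      HasDerivAt m3 (m2 t * p t - m1 t * m3 t * xi t) t)
    (hxi : ∀ t ∈ Set.Ico t0 tstar,
      HasDerivAt xi (-((xi t)^2 + 1) * (2 * p t - m1 t)) t)
    (hp : ∀ t ∈ Set.Ico t0 tstar,
      HasDerivAt p (-((xi t)^2 + 1) * (1 + m2 t * m3 t - 2 * (m3 t)^2 * xi t)) t)
    (hcoll : Tendsto xi (nhdsWithin tstar (Set.Iio tstar)) atTop) :
    ∃ t1 ∈ Set.Ico t0 tstar, ∀ t ∈ Set.Ico t1 tstar, 0 < deriv xi t := by
  have hsol : IsReducedTwoBodySolution t0 tstar m1 m2 m3 xi p := ⟨hm1, hm2, hm3, hxi, hp⟩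
  set E := twoBodyEnergy (m1 t0) (m2 t0) (m3 t0) (xi t0) (p t0)
  obtain ⟨t1, ht1, hbig⟩ := exists_mem_Ico_forall_of_eventually_nhdsLT ht0
    (hcoll.eventually_gt_atTop (2 + (m1 t0 ^ 2 + m2 t0 ^ 2 + m3 t0 ^ 2) + 4 * |E|))
  have hsub : Ico t1 tstar ⊆ Ico t0 tstar := Ico_subset_Ico_left ht1.1
  have hw : StrictAntiOn (fun t => (m1 t - 2 * p t) / √(xi t ^ 2 + 1)) (Ico t1 tstar) :=
    strictAntiOn_Ico_of_hasDerivAt_neg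
      (fun t ht => hsol.hasDerivAt_m1_sub_two_p_div_sqrt t (hsub ht))
      (fun t ht => div_neg_of_neg_of_pos
        (cosAccel_neg (hsol.sum_sq_eq t (hsub ht) ▸ hbig t ht)) (by positivity))
  have hwpos := pos_of_strictAntiOn_of_hasDerivAt_of_tendsto
    (fun t ht => hsol.hasDerivAt_xi_div_sqrt t (hsub ht)) hw
    (fun t _ => div_sqrt_sq_add_one_lt_one (xi t)) (tendsto_div_sqrt_sq_add_one_atTop.comp hcoll)
  refine ⟨t1, ht1, fun t ht => ?_⟩
  have h2p : 2 * p t - m1 t < 0 := by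
    have := hwpos t ht
    rw [div_pos_iff_of_pos_right (by positivity)] at this
    linarith
  rw [(hxi t (hsub ht)).deriv]
  exact mul_pos_of_neg_of_neg (neg_neg_of_pos (by positivity)) h2p
end

section
/- The plane {m₂ = m₃ = 0} is invariant under the dynamics of the reduced two-body system: if (m₁,m₂,m₃,ξ,p) is a solution on [t₀, t*) with m₂(t₀) = 0 and m₃(t₀) = 0, then m₂(t) = 0, m₃(t) = 0 and m₁(t) = m₁(t₀) for every t ∈ [t₀, t*). -/
/-!
Along a solution, `(m₂, m₃)` solves the linear system
`m₂' = m₁ξ · m₂ - (p + 2m₁ξ²) · m₃`, `m₃' = p · m₂ - m₁ξ · m₃`,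
whose coefficients are continuous, hence bounded on compact intervals. By Grönwall's inequality
the only solution of such a system through the origin is zero; then `m₁' = 0` as well.
-/

open Set

lemma norm_linear_planar_le (a b c d x y : ℝ) :
    ‖(a * x + b * y, c * x + d * y)‖ ≤ (|a| + |b| + |c| + |d|) * ‖(x, y)‖ := by
  have hx : |x| ≤ ‖(x, y)‖ := norm_fst_le (x, y)
  have hy : |y| ≤ ‖(x, y)‖ := norm_snd_le (x, y)
  have row : ∀ α β : ℝ, |α * x + β * y| ≤ (|α| + |β|) * ‖(x, y)‖ := fun α β =>
    calc |α * x + β * y| ≤ |α| * |x| + |β| * |y| := by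
          simpa only [abs_mul] using abs_add_le (α * x) (β * y)
      _ ≤ (|α| + |β|) * ‖(x, y)‖ := by
          nlinarith [abs_nonneg α, abs_nonneg β]
  rw [Prod.norm_mk]
  refine max_le ((row a b).trans ?_) ((row c d).trans ?_) <;>
    refine mul_le_mul_of_nonneg_right ?_ (norm_nonneg _) <;>
    linarith [abs_nonneg a, abs_nonneg b, abs_nonneg c, abs_nonneg d]

theorem eq_zero_of_linear_planar_ODE {u v a b c d : ℝ → ℝ} {t₀ t₁ : ℝ}
    (ha : ContinuousOn a (Icc t₀ t₁)) (hb : ContinuousOn b (Icc t₀ t₁))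
    (hc : ContinuousOn c (Icc t₀ t₁)) (hd : ContinuousOn d (Icc t₀ t₁))
    (hu : ContinuousOn u (Icc t₀ t₁)) (hv : ContinuousOn v (Icc t₀ t₁))
    (hu' : ∀ s ∈ Ico t₀ t₁, HasDerivWithinAt u (a s * u s + b s * v s) (Ici s) s)
    (hv' : ∀ s ∈ Ico t₀ t₁, HasDerivWithinAt v (c s * u s + d s * v s) (Ici s) s)
    (hu₀ : u t₀ = 0) (hv₀ : v t₀ = 0) :
    ∀ s ∈ Icc t₀ t₁, u s = 0 ∧ v s = 0 := by
  obtain ⟨K, hK⟩ := isCompact_Icc.exists_bound_of_continuousOn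
    (((ha.abs.add hb.abs).add hc.abs).add hd.abs)
  have hzero := eq_zero_of_abs_deriv_le_mul_abs_self_of_eq_zero_right (K := K)
    (f := fun s => (u s, v s)) (hu.prodMk hv) (fun s hs => (hu' s hs).prodMk (hv' s hs))
    (by simp [hu₀, hv₀]) fun s hs =>
      (norm_linear_planar_le _ _ _ _ _ _).trans <| by
        gcongr
        exact (le_abs_self _).trans (hK s (Ico_subset_Icc_self hs))
  exact fun s hs => Prod.mk_eq_zero.mp (hzero s hs)

theorem invariant_plane_general
    (t0 : ℝ) (tstar : EReal)
    (m1 m2 m3 xi p : ℝ → ℝ)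
    (hm1 : ∀ t : ℝ, t0 ≤ t → (t : EReal) < tstar →
      HasDerivAt m1 (xi t * (-(m2 t)^2 + (m3 t)^2 + 2 * m2 t * m3 t * xi t)) t)
    (hm2 : ∀ t : ℝ, t0 ≤ t → (t : EReal) < tstar →
      HasDerivAt m2 (m1 t * m2 t * xi t - m3 t * p t - 2 * m1 t * m3 t * (xi t)^2) t)
    (hm3 : ∀ t : ℝ, t0 ≤ t → (t : EReal) < tstar →
      HasDerivAt m3 (m2 t * p t - m1 t * m3 t * xi t) t)
    (hxi : ∀ t : ℝ, t0 ≤ t → (t : EReal) < tstar →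
      HasDerivAt xi (-((xi t)^2 + 1) * (2 * p t - m1 t)) t)
    (hp : ∀ t : ℝ, t0 ≤ t → (t : EReal) < tstar →
      HasDerivAt p (-((xi t)^2 + 1) * (1 + m2 t * m3 t - 2 * (m3 t)^2 * xi t)) t)
    (hm2init : m2 t0 = 0) (hm3init : m3 t0 = 0) :
    ∀ t : ℝ, t0 ≤ t → (t : EReal) < tstar →
      m2 t = 0 ∧ m3 t = 0 ∧ m1 t = m1 t0 := by
  intro t ht ht'
  have onIcc : ∀ {f f' : ℝ → ℝ}, (∀ s, t0 ≤ s → (s : EReal) < tstar → HasDerivAt f (f' s) s) →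
      ∀ s ∈ Icc t0 t, HasDerivAt f (f' s) s := fun hf s hs =>
    hf s hs.1 (lt_of_le_of_lt (EReal.coe_le_coe_iff.mpr hs.2) ht')
  have rightDeriv : ∀ {f f' : ℝ → ℝ}, (∀ s ∈ Icc t0 t, HasDerivAt f (f' s) s) →
      ∀ s ∈ Ico t0 t, HasDerivWithinAt f (f' s) (Ici s) s := fun hf s hs =>
    (hf s (Ico_subset_Icc_self hs)).hasDerivWithinAt
  have hm1c := HasDerivAt.continuousOn (onIcc hm1)
  have hxic := HasDerivAt.continuousOn (onIcc hxi)
  have hpc := HasDerivAt.continuousOn (onIcc hp)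
  have hplane := eq_zero_of_linear_planar_ODE (u := m2) (v := m3)
    (a := fun s => m1 s * xi s) (b := fun s => -p s - 2 * m1 s * xi s ^ 2) (c := p)
    (d := fun s => -(m1 s * xi s)) (hm1c.mul hxic)
    (hpc.neg.sub ((continuousOn_const.mul hm1c).mul (hxic.pow 2))) hpc (hm1c.mul hxic).neg
    (HasDerivAt.continuousOn (onIcc hm2)) (HasDerivAt.continuousOn (onIcc hm3))
    (rightDeriv fun s hs => (onIcc hm2 s hs).congr_deriv (by ring))
    (rightDeriv fun s hs => (onIcc hm3 s hs).congr_deriv (by ring)) hm2init hm3init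
  have hm1const := constant_of_has_deriv_right_zero hm1c fun s hs => by
    obtain ⟨hm2s, hm3s⟩ := hplane s (Ico_subset_Icc_self hs)
    simpa [hm2s, hm3s] using rightDeriv (onIcc hm1) s hs
  have ht_mem : t ∈ Icc t0 t := ⟨ht, le_rfl⟩
  exact ⟨(hplane t ht_mem).1, (hplane t ht_mem).2, hm1const t ht_mem⟩

/-- The plane `{m₂ = m₃ = 0}` is invariant under the dynamics of the reduced two-body
system: a solution on `[t₀, t*)` (with `t* ∈ (t₀, ∞]`) starting with `m₂(t₀) = 0` and
`m₃(t₀) = 0` keeps `m₂ ≡ 0`, `m₃ ≡ 0`, and `m₁` constant. -/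
theorem invariant_plane
    (t0 : ℝ) (tstar : EReal) (ht0 : (t0 : EReal) < tstar)
    (m1 m2 m3 xi p : ℝ → ℝ)
    (hm1 : ∀ t : ℝ, t0 ≤ t → (t : EReal) < tstar →
      HasDerivAt m1 (xi t * (-(m2 t)^2 + (m3 t)^2 + 2 * m2 t * m3 t * xi t)) t)
    (hm2 : ∀ t : ℝ, t0 ≤ t → (t : EReal) < tstar →
      HasDerivAt m2 (m1 t * m2 t * xi t - m3 t * p t - 2 * m1 t * m3 t * (xi t)^2) t)
    (hm3 : ∀ t : ℝ, t0 ≤ t → (t : EReal) < tstar →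
      HasDerivAt m3 (m2 t * p t - m1 t * m3 t * xi t) t)
    (hxi : ∀ t : ℝ, t0 ≤ t → (t : EReal) < tstar →
      HasDerivAt xi (-((xi t)^2 + 1) * (2 * p t - m1 t)) t)
    (hp : ∀ t : ℝ, t0 ≤ t → (t : EReal) < tstar →
      HasDerivAt p (-((xi t)^2 + 1) * (1 + m2 t * m3 t - 2 * (m3 t)^2 * xi t)) t)
    (hm2init : m2 t0 = 0) (hm3init : m3 t0 = 0) :
    ∀ t : ℝ, t0 ≤ t → (t : EReal) < tstar →
      m2 t = 0 ∧ m3 t = 0 ∧ m1 t = m1 t0 :=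
  invariant_plane_general t0 tstar m1 m2 m3 xi p hm1 hm2 hm3 hxi hp hm2init hm3init
end

section
/- For every h ∈ ℝ, the set { (x,y,z) ∈ ℝ³ : x² + y² + z² = 1 and y² − x(1−z) = h(1−z)² } is homeomorphic to the circle S¹. -/
/-!
Stereographic projection from the north pole `N = (0,0,1)` identifies `S² \ {N}` with the
plane, and off `N` the defining equation is `(1 - z)²` times the parabola equation `p² - ξ = h`.
So the level set minus `N` is a copy of the parabola, i.e. of `ℝ` (parametrised by `p`). Being
compact and Hausdorff, the level set is therefore the one-point compactification of `ℝ`, which is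
the circle.
-/

noncomputable section

-- Junk value `(0, 0)` at the north pole, where `1 - z = 0`.
def stereoProj (w : ℝ × ℝ × ℝ) : ℝ × ℝ :=
  (w.1 / (1 - w.2.2), w.2.1 / (1 - w.2.2))

def stereoProjInv (q : ℝ × ℝ) : ℝ × ℝ × ℝ :=
  (2 * q.1 / (q.1 ^ 2 + q.2 ^ 2 + 1), 2 * q.2 / (q.1 ^ 2 + q.2 ^ 2 + 1),
    (q.1 ^ 2 + q.2 ^ 2 - 1) / (q.1 ^ 2 + q.2 ^ 2 + 1))

@[fun_prop]
lemma continuous_stereoProjInv : Continuous stereoProjInv := by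
  have hd : ∀ q : ℝ × ℝ, q.1 ^ 2 + q.2 ^ 2 + 1 ≠ 0 := fun q ↦ by positivity
  unfold stereoProjInv
  fun_prop (disch := exact hd)

lemma stereoProjInv_mem_sphere (q : ℝ × ℝ) :
    (stereoProjInv q).1 ^ 2 + (stereoProjInv q).2.1 ^ 2 + (stereoProjInv q).2.2 ^ 2 = 1 := by
  have hd : q.1 ^ 2 + q.2 ^ 2 + 1 ≠ 0 := by positivity
  simp only [stereoProjInv]
  field_simp
  ring

lemma stereoProjInv_snd_snd_ne_one (q : ℝ × ℝ) : (stereoProjInv q).2.2 ≠ 1 := by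
  have hd : 0 < q.1 ^ 2 + q.2 ^ 2 + 1 := by positivity
  simp only [stereoProjInv, ne_eq, div_eq_one_iff_eq hd.ne']
  linarith

lemma stereoProj_stereoProjInv (q : ℝ × ℝ) : stereoProj (stereoProjInv q) = q := by
  have hd : q.1 ^ 2 + q.2 ^ 2 + 1 ≠ 0 := by positivity
  simp only [stereoProj, stereoProjInv]
  ext <;> field_simp <;> ring

lemma stereoProjInv_stereoProj {w : ℝ × ℝ × ℝ} (hw : w.1 ^ 2 + w.2.1 ^ 2 + w.2.2 ^ 2 = 1)
    (hz : w.2.2 ≠ 1) : stereoProjInv (stereoProj w) = w := by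
  obtain ⟨x, y, z⟩ := w
  have hz' : 1 - z ≠ 0 := sub_ne_zero.mpr hz.symm
  simp only [stereoProj, stereoProjInv] at hw ⊢
  have hd : (x / (1 - z)) ^ 2 + (y / (1 - z)) ^ 2 + 1 = 2 / (1 - z) := by
    field_simp
    linear_combination hw
  rw [hd]
  refine Prod.ext ?_ (Prod.ext ?_ ?_)
  · field_simp
  · field_simp
  · field_simp
    linear_combination hw

lemma eq_northPole_of_mem_sphere {w : ℝ × ℝ × ℝ} (hw : w.1 ^ 2 + w.2.1 ^ 2 + w.2.2 ^ 2 = 1)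
    (hz : w.2.2 = 1) : w = (0, 0, 1) := by
  obtain ⟨x, y, z⟩ := w
  simp only at hw hz
  subst hz
  have hx : x = 0 := by nlinarith [sq_nonneg x, sq_nonneg y]
  have hy : y = 0 := by nlinarith [sq_nonneg x, sq_nonneg y]
  rw [hx, hy]

def degenerateLevelSet (h : ℝ) : Set (ℝ × ℝ × ℝ) :=
  {w | w.1 ^ 2 + w.2.1 ^ 2 + w.2.2 ^ 2 = 1 ∧
    w.2.1 ^ 2 - w.1 * (1 - w.2.2) = h * (1 - w.2.2) ^ 2}

lemma levelEquation_iff_stereoProj {h : ℝ} {w : ℝ × ℝ × ℝ} (hz : w.2.2 ≠ 1) :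
    w.2.1 ^ 2 - w.1 * (1 - w.2.2) = h * (1 - w.2.2) ^ 2 ↔
      (stereoProj w).2 ^ 2 - (stereoProj w).1 = h := by
  have hz' : 1 - w.2.2 ≠ 0 := sub_ne_zero.mpr hz.symm
  have hquot : (w.2.1 / (1 - w.2.2)) ^ 2 - w.1 / (1 - w.2.2) =
      (w.2.1 ^ 2 - w.1 * (1 - w.2.2)) / (1 - w.2.2) ^ 2 := by
    field_simp
  rw [stereoProj, hquot, div_eq_iff (pow_ne_zero 2 hz')]

namespace degenerateLevelSet

lemma isCompact (h : ℝ) : IsCompact (degenerateLevelSet h) := by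
  refine (isCompact_Icc (a := ((-1, -1, -1) : ℝ × ℝ × ℝ)) (b := (1, 1, 1))).of_isClosed_subset
    ?_ ?_
  · exact (isClosed_eq (by fun_prop) (by fun_prop)).inter (isClosed_eq (by fun_prop) (by fun_prop))
  · rintro ⟨x, y, z⟩ ⟨hw, -⟩
    simp only at hw
    refine ⟨⟨?_, ?_, ?_⟩, ?_, ?_, ?_⟩ <;>
      nlinarith [sq_nonneg (x - 1), sq_nonneg (y - 1), sq_nonneg (z - 1),
        sq_nonneg (x + 1), sq_nonneg (y + 1), sq_nonneg (z + 1)]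

instance (h : ℝ) : CompactSpace (degenerateLevelSet h) :=
  isCompact_iff_compactSpace.mp (isCompact h)

def northPole (h : ℝ) : degenerateLevelSet h :=
  ⟨(0, 0, 1), by norm_num [degenerateLevelSet]⟩

lemma stereoProjInv_parabola_mem (h p : ℝ) : stereoProjInv (p ^ 2 - h, p) ∈ degenerateLevelSet h :=
  ⟨stereoProjInv_mem_sphere _, (levelEquation_iff_stereoProj (stereoProjInv_snd_snd_ne_one _)).mpr
    (by rw [stereoProj_stereoProjInv]; ring)⟩

lemma snd_snd_ne_one {h : ℝ} {w : degenerateLevelSet h} (hw : w ≠ northPole h) : w.1.2.2 ≠ 1 :=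
  fun hz ↦ hw <| Subtype.ext <| eq_northPole_of_mem_sphere w.2.1 hz

def puncturedHomeomorph (h : ℝ) : ℝ ≃ₜ {w : degenerateLevelSet h // w ≠ northPole h} where
  toFun p := ⟨⟨stereoProjInv (p ^ 2 - h, p), stereoProjInv_parabola_mem h p⟩,
    fun hN ↦ stereoProjInv_snd_snd_ne_one _ (congrArg (·.1.2.2) hN)⟩
  invFun w := (stereoProj w.1.1).2
  left_inv p := by simp only [stereoProj_stereoProjInv]
  right_inv w := by
    have hz := snd_snd_ne_one w.2
    have hparabola := (levelEquation_iff_stereoProj hz).mp w.1.2.2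
    refine Subtype.ext <| Subtype.ext ?_
    calc stereoProjInv ((stereoProj w.1.1).2 ^ 2 - h, (stereoProj w.1.1).2)
        = stereoProjInv (stereoProj w.1.1) := congrArg stereoProjInv <| Prod.ext (by linarith) rfl
      _ = w.1.1 := stereoProjInv_stereoProj w.1.2.1 hz
  continuous_toFun := by fun_prop
  continuous_invFun := by
    simp only [stereoProj]
    exact Continuous.div (by fun_prop) (by fun_prop)
      fun w ↦ sub_ne_zero.mpr (snd_snd_ne_one w.2).symm

def onePointHomeomorph (h : ℝ) : OnePoint ℝ ≃ₜ degenerateLevelSet h :=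
  OnePoint.equivOfIsEmbeddingOfRangeEq (northPole h) (Subtype.val ∘ puncturedHomeomorph h)
    (Topology.IsEmbedding.subtypeVal.comp (puncturedHomeomorph h).isEmbedding)
    (by rw [(puncturedHomeomorph h).surjective.range_comp, Subtype.range_coe_subtype]; rfl)

end degenerateLevelSet

end

/-- The compactified degenerate level set `Σ̄_{0,h}` (Casimir value `C = 0`): the subset
`{(x,y,z) ∈ S² : y² − x(1−z) = h(1−z)²}` of the unit sphere is homeomorphic to the
circle `S¹`. -/
theorem degenerate_level_set_homeomorph_circle (h : ℝ) :
    Nonempty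
      (({w : ℝ × ℝ × ℝ | w.1 ^ 2 + w.2.1 ^ 2 + w.2.2 ^ 2 = 1 ∧
          w.2.1 ^ 2 - w.1 * (1 - w.2.2) = h * (1 - w.2.2) ^ 2} :
          Set (ℝ × ℝ × ℝ)) ≃ₜ
        Metric.sphere (0 : EuclideanSpace ℝ (Fin 2)) 1) :=
  ⟨(degenerateLevelSet.onePointHomeomorph h).symm.trans (onePointEquivSphereOfFinrankEq (by simp))⟩
end
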